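/- Let H be a Hadamard matrix of order M (entries in {−1,1}, Hᵀ H = M·I). Let B₁, …, B_D be M×N matrices with entries in {0,1}, each column of each Bᵢ containing exactly one entry equal to 1, and suppose B = Σᵢ₌₁^D Bᵢ has all entries in {0,1}. Let A be a real number with 2A ≥ D, K a natural number, and assume for every set S of column indices with |S| ≤ K that #{ j : ∃ ℓ ∈ S, B_{j,ℓ} = 1 } ≥ A·|S|. Let Q be the (M·D)×N matrix obtained by vertically stacking H·B₁, …, H·B_D. Then for every ternary vector v ∈ ℝᴺ with ‖v‖₀ ≤ K, ‖Qv‖_∞ ≥ sqrt( (2A − D)·‖v‖₀ / D ). -/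

import Mathlib

/-!
A Hadamard matrix scales squared Euclidean norms by `M`, so `‖Qv‖₂² = M · Σᵢ ‖Bᵢ v‖₂²`.
Row `j` of `Bᵢ v` is the sum of the `±1` entries of `v` over the set `Tᵢⱼ` of support columns
meeting row `j`, and its square is at least `2 - |Tᵢⱼ|` when `Tᵢⱼ` is nonempty. Since every
column of `Bᵢ` has a single `1`, the `|Tᵢⱼ|` add up to `‖v‖₀`, so `‖Bᵢ v‖₂² ≥ 2 |Nᵢ(S)| - ‖v‖₀`
where `Nᵢ(S)` is the neighbourhood of the support in `Bᵢ`. The neighbourhood in `B` is covered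
by the `Nᵢ(S)`, and expansion gives `‖Qv‖₂² ≥ M (2A - D) ‖v‖₀`. The largest of the `M D`
entries of `Qv` dominates their root mean square.
-/

open Matrix Finset

theorem sum_sq_le_card_mul_norm_sq {ι : Type*} [Fintype ι] (x : ι → ℝ) :
    ∑ i, x i ^ 2 ≤ Fintype.card ι * ‖x‖ ^ 2 := by
  calc ∑ i, x i ^ 2 ≤ ∑ _i : ι, ‖x‖ ^ 2 := sum_le_sum fun i _ => by
        simpa only [Real.norm_eq_abs, sq_abs] using
          pow_le_pow_left₀ (norm_nonneg _) (norm_le_pi_norm x i) 2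
    _ = Fintype.card ι * ‖x‖ ^ 2 := by rw [sum_const, card_univ, nsmul_eq_mul]

theorem sum_sq_mulVec_of_transpose_mul_self {m n R : Type*} [Fintype m] [Fintype n]
    [DecidableEq n] [CommSemiring R] {H : Matrix m n R} {c : R} (hH : Hᵀ * H = c • 1) (w : n → R) :
    ∑ j, (H *ᵥ w) j ^ 2 = c * ∑ ℓ, w ℓ ^ 2 := by
  have h : H *ᵥ w ⬝ᵥ H *ᵥ w = c * (w ⬝ᵥ w) := by
    rw [dotProduct_mulVec, ← mulVec_transpose, mulVec_mulVec, hH, smul_mulVec, one_mulVec,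
      smul_dotProduct, smul_eq_mul]
  simpa only [dotProduct, sq] using h

theorem two_mul_ite_nonempty_sub_card_le_sq_sum {ι : Type*} (T : Finset ι) {v : ι → ℝ}
    (hv : ∀ ℓ ∈ T, v ℓ = -1 ∨ v ℓ = 1) :
    2 * (if T.Nonempty then 1 else 0) - T.card ≤ (∑ ℓ ∈ T, v ℓ) ^ 2 := by
  rcases T.eq_empty_or_nonempty with rfl | hT
  · simp
  rw [if_pos hT]
  rcases (Nat.one_le_iff_ne_zero.mpr hT.card_ne_zero).eq_or_lt with hcard | hcard
  · obtain ⟨ℓ, rfl⟩ := card_eq_one.mp hcard.symm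
    rcases hv ℓ (mem_singleton_self ℓ) with h | h <;> norm_num [h]
  · have : (2 : ℝ) ≤ T.card := by exact_mod_cast hcard
    nlinarith [sq_nonneg (∑ ℓ ∈ T, v ℓ)]

section ZeroOneMatrix

variable {m n : Type*}

open Classical in
/-- The neighbourhood `N(S)` of the paper: the rows meeting the columns in `S`. -/
noncomputable def rowsHit [Fintype m] (B : Matrix m n ℝ) (S : Finset n) : Finset m :=
  univ.filter fun j => ∃ ℓ ∈ S, B j ℓ = 1

theorem mulVec_apply_eq_sum_filter [Fintype n] {B : Matrix m n ℝ}
    (hB : ∀ j ℓ, B j ℓ = 0 ∨ B j ℓ = 1) (v : n → ℝ) (j : m) :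
    (B *ᵥ v) j = ∑ ℓ ∈ (univ.filter fun ℓ => v ℓ ≠ 0).filter (B j · = 1), v ℓ := by
  rw [sum_filter, sum_filter, mulVec, dotProduct]
  refine sum_congr rfl fun ℓ _ => ?_
  rcases hB j ℓ with h | h <;> by_cases hv : v ℓ = 0 <;> simp [h, hv]

theorem sum_card_filter_eq_card [Fintype m] {B : Matrix m n ℝ}
    (hcol : ∀ ℓ, (univ.filter (B · ℓ = 1)).card = 1) (S : Finset n) :
    ∑ j, (S.filter (B j · = 1)).card = S.card := by
  refine (@sum_card_bipartiteAbove_eq_sum_card_bipartiteBelow _ _ (fun j ℓ => B j ℓ = 1) _ _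
    fun _ _ => inferInstance).trans ?_
  simp [bipartiteBelow, hcol]

theorem two_mul_card_rowsHit_sub_card_le_sum_sq [Fintype m] [Fintype n]
    {B : Matrix m n ℝ} (hB : ∀ j ℓ, B j ℓ = 0 ∨ B j ℓ = 1)
    (hcol : ∀ ℓ, (univ.filter (B · ℓ = 1)).card = 1)
    {v : n → ℝ} (hv : ∀ ℓ, v ℓ = -1 ∨ v ℓ = 0 ∨ v ℓ = 1) :
    2 * ((rowsHit B (univ.filter fun ℓ => v ℓ ≠ 0)).card : ℝ)
      - (univ.filter fun ℓ => v ℓ ≠ 0).card ≤ ∑ j, (B *ᵥ v) j ^ 2 := by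
  set S := univ.filter fun ℓ => v ℓ ≠ 0
  set T : m → Finset n := fun j => S.filter (B j · = 1)
  have hrows : rowsHit B S = univ.filter fun j => (T j).Nonempty := by
    ext j
    simp only [rowsHit, mem_filter, mem_univ, true_and, T, filter_nonempty_iff]
  have hsign : ∀ j, ∀ ℓ ∈ T j, v ℓ = -1 ∨ v ℓ = 1 := fun j ℓ hℓ =>
    (hv ℓ).imp_right fun h => h.resolve_left (mem_filter.mp (mem_filter.mp hℓ).1).2
  calc 2 * ((rowsHit B S).card : ℝ) - S.card
      = ∑ j, (2 * (if (T j).Nonempty then 1 else 0) - ((T j).card : ℝ)) := by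
        rw [sum_sub_distrib, ← mul_sum, sum_boole, hrows, ← sum_card_filter_eq_card hcol S,
          Nat.cast_sum]
    _ ≤ ∑ j, (B *ᵥ v) j ^ 2 := sum_le_sum fun j _ => by
        rw [mulVec_apply_eq_sum_filter hB]
        exact two_mul_ite_nonempty_sub_card_le_sq_sum (T j) (hsign j)

theorem card_rowsHit_sum_le [Fintype m] {D : Type*} [Fintype D] {B : D → Matrix m n ℝ}
    (hB : ∀ i j ℓ, B i j ℓ = 0 ∨ B i j ℓ = 1) (S : Finset n) :
    (rowsHit (∑ i, B i) S).card ≤ ∑ i, (rowsHit (B i) S).card := by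
  classical
  refine le_trans (card_le_card fun j hj => ?_) card_biUnion_le
  obtain ⟨ℓ, hℓ, hsum⟩ := (mem_filter.mp hj).2
  obtain ⟨i, hi⟩ : ∃ i, B i j ℓ = 1 := by
    by_contra! hno
    rw [Matrix.sum_apply, sum_eq_zero fun i _ => (hB i j ℓ).resolve_right (hno i)] at hsum
    exact zero_ne_one hsum
  exact mem_biUnion.mpr ⟨i, mem_univ i, mem_filter.mpr ⟨mem_univ j, ℓ, hℓ, hi⟩⟩

end ZeroOneMatrix

theorem sum_sq_mulVec_stack {D k m n : Type*} [Fintype D] [Fintype k] [Fintype m] [Fintype n]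
    [DecidableEq m] {H : Matrix k m ℝ} {c : ℝ} (hH : Hᵀ * H = c • 1) (B : D → Matrix m n ℝ)
    {Q : Matrix (D × k) n ℝ} (hQ : ∀ p ℓ, Q p ℓ = (H * B p.1) p.2 ℓ) (v : n → ℝ) :
    ∑ p, (Q *ᵥ v) p ^ 2 = c * ∑ i, ∑ j, (B i *ᵥ v) j ^ 2 := by
  have hQv : ∀ i j, (Q *ᵥ v) (i, j) = (H *ᵥ B i *ᵥ v) j := fun i j => by
    rw [mulVec_mulVec]
    simp only [mulVec, dotProduct, hQ]
  simp only [Fintype.sum_prod_type, hQv, mul_sum, sum_sq_mulVec_of_transpose_mul_self hH]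

open Classical in
theorem stmt_8_general {M N D : ℕ} (H : Matrix (Fin M) (Fin M) ℝ)
    (hH : Hᵀ * H = (M : ℝ) • 1)
    (B : Fin D → Matrix (Fin M) (Fin N) ℝ)
    (hBentries : ∀ i j ℓ, B i j ℓ = 0 ∨ B i j ℓ = 1)
    (hcol : ∀ i ℓ, (univ.filter fun j => B i j ℓ = 1).card = 1)
    (A : ℝ) (K : ℕ)
    (hexp : ∀ S : Finset (Fin N), S.card ≤ K →
      A * S.card ≤ ((univ.filter fun j => ∃ ℓ ∈ S, (∑ i, B i) j ℓ = 1).card : ℝ))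
    (Q : Matrix (Fin D × Fin M) (Fin N) ℝ)
    (hQ : ∀ p : Fin D × Fin M, ∀ ℓ, Q p ℓ = (H * B p.1) p.2 ℓ)
    (v : Fin N → ℝ) (hv : ∀ ℓ, v ℓ = -1 ∨ v ℓ = 0 ∨ v ℓ = 1)
    (hsupp : (univ.filter fun ℓ => v ℓ ≠ 0).card ≤ K) :
    Real.sqrt ((2 * A - D) * (univ.filter fun ℓ => v ℓ ≠ 0).card / D) ≤
      ‖Q.mulVec v‖ := by
  set S := univ.filter fun ℓ => v ℓ ≠ 0
  have hexpand : A * S.card ≤ ∑ i, ((rowsHit (B i) S).card : ℝ) :=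
    (show A * S.card ≤ (rowsHit (∑ i, B i) S).card by
      -- `convert` reconciles the two `Decidable` instances of the filter predicate
      unfold rowsHit; convert hexp S hsupp).trans
      (by exact_mod_cast card_rowsHit_sum_le hBentries S)
  have hblocks : (2 * A - D) * S.card ≤ ∑ i, ∑ j, (B i *ᵥ v) j ^ 2 := calc
    (2 * A - D) * S.card ≤ ∑ i, (2 * ((rowsHit (B i) S).card : ℝ) - S.card) := by
      rw [sum_sub_distrib, ← mul_sum, sum_const, card_univ, Fintype.card_fin, nsmul_eq_mul]
      linarith
    _ ≤ ∑ i, ∑ j, (B i *ᵥ v) j ^ 2 := sum_le_sum fun i _ =>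
      two_mul_card_rowsHit_sub_card_le_sum_sq (hBentries i) (hcol i) hv
  have hnorm : ∑ i, ∑ j, (B i *ᵥ v) j ^ 2 ≤ D * ‖Q *ᵥ v‖ ^ 2 := by
    rcases Nat.eq_zero_or_pos M with rfl | hM
    · simp only [univ_eq_empty, sum_empty, sum_const_zero]
      positivity
    have := sum_sq_le_card_mul_norm_sq (Q *ᵥ v)
    rw [sum_sq_mulVec_stack hH B hQ, Fintype.card_prod, Fintype.card_fin, Fintype.card_fin,
      Nat.cast_mul, mul_comm (D : ℝ), mul_assoc] at this
    exact le_of_mul_le_mul_left this (Nat.cast_pos.mpr hM)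
  refine Real.sqrt_le_iff.mpr ⟨norm_nonneg _, div_le_of_le_mul₀ D.cast_nonneg (sq_nonneg _) ?_⟩
  linarith

open Classical in
/-- Detecting guarantee of the expander-based SCQGT pooling matrix: with `H`
Hadamard of order `M`, blocks `Bᵢ` as in the expander decomposition, `2A ≥ D`, and the
expansion property, the vertical stack `Q` of the `H·Bᵢ` satisfies
`‖Qv‖_∞ ≥ sqrt((2A − D)·‖v‖₀ / D)` for every ternary `v` with `‖v‖₀ ≤ K`.
(`‖·‖` on `Fin D × Fin M → ℝ` is the sup norm.) -/
theorem stmt_8 {M N D : ℕ} (H : Matrix (Fin M) (Fin M) ℝ)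
    (hHentries : ∀ i j, H i j = -1 ∨ H i j = 1)
    (hH : Hᵀ * H = (M : ℝ) • 1)
    (B : Fin D → Matrix (Fin M) (Fin N) ℝ)
    (hBentries : ∀ i j ℓ, B i j ℓ = 0 ∨ B i j ℓ = 1)
    (hcol : ∀ i ℓ, (univ.filter fun j => B i j ℓ = 1).card = 1)
    (hsum : ∀ j ℓ, (∑ i, B i) j ℓ = 0 ∨ (∑ i, B i) j ℓ = 1)
    (A : ℝ) (hAD : (D : ℝ) ≤ 2 * A) (K : ℕ)
    (hexp : ∀ S : Finset (Fin N), S.card ≤ K →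
      A * S.card ≤ ((univ.filter fun j => ∃ ℓ ∈ S, (∑ i, B i) j ℓ = 1).card : ℝ))
    (Q : Matrix (Fin D × Fin M) (Fin N) ℝ)
    (hQ : ∀ p : Fin D × Fin M, ∀ ℓ, Q p ℓ = (H * B p.1) p.2 ℓ)
    (v : Fin N → ℝ) (hv : ∀ ℓ, v ℓ = -1 ∨ v ℓ = 0 ∨ v ℓ = 1)
    (hsupp : (univ.filter fun ℓ => v ℓ ≠ 0).card ≤ K) :
    Real.sqrt ((2 * A - D) * (univ.filter fun ℓ => v ℓ ≠ 0).card / D) ≤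
      ‖Q.mulVec v‖ :=
  stmt_8_general H hH B hBentries hcol A K hexp Q hQ v hv hsupp
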